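/- arXiv:2002.07275 — 6 statements merged into one kernel-verified Lean document; each statement's English description precedes it below -/
import Mathlib

section
/- Let 𝕏 be a finite edge-trivial graph of groups with half-edge adjacency matrix W of size k×k. Then the reciprocal of the Ihara zeta function of 𝕏 equals det(I_k - Wu); equivalently, the number C_n of closed reduced paths in 𝕏 of length n equals tr(W^n) for all n ≥ 1. -/
structure LegGraph where
  V : Type
  H : Type
  [fV : Fintype V]
  [fH : Fintype H]
  [dV : DecidableEq V]
  [dH : DecidableEq H]
  r : H → V
  bar : H → H
  bar_bar : ∀ h, bar (bar h) = h

attribute [instance] LegGraph.fV LegGraph.fH LegGraph.dV LegGraph.dH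

namespace LegGraph

def IsClosedPath (X : LegGraph) {n : ℕ} (h : ZMod n → X.H) : Prop :=
  ∀ j, X.r (h (j + 1)) = X.r (X.bar (h j))

end LegGraph

/-- A finite edge-trivial graph of groups: a finite graph with legs together with a
finite group at each vertex. -/
structure GraphOfGroups where
  X : LegGraph
  Gp : X.V → Type
  [grp : ∀ v, Group (Gp v)]
  [fin : ∀ v, Fintype (Gp v)]

attribute [instance] GraphOfGroups.grp GraphOfGroups.fin

namespace GraphOfGroups

/-- The charge of a vertex: the order of its vertex group. -/
def charge (𝕏 : GraphOfGroups) (v : 𝕏.X.V) : ℕ := Fintype.card (𝕏.Gp v)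

/-- The half-edge adjacency matrix `W` of an edge-trivial graph of groups. -/
def Wmat (𝕏 : GraphOfGroups) : Matrix 𝕏.X.H 𝕏.X.H ℤ := fun h h' =>
  if h' = 𝕏.X.bar h then (𝕏.charge (𝕏.X.r h') : ℤ) - 1
  else if 𝕏.X.r (𝕏.X.bar h) = 𝕏.X.r h' then (𝕏.charge (𝕏.X.r h') : ℤ) else 0

/-- A closed reduced path of length `n` in a graph of groups: a cyclic sequence of
half-edges `h_j` together with group elements `g_j ∈ X_{v_j}` (the group of the root of
`h_j`, which `g_j` precedes), such that the underlying half-edge sequence is a closed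
path and for each `j` either `h_{j+1} ≠ h̄_j` or the intervening group element is
nontrivial. -/
def CRPath (𝕏 : GraphOfGroups) (n : ℕ) : Type :=
  {p : (h : ZMod n → 𝕏.X.H) × ((j : ZMod n) → 𝕏.Gp (𝕏.X.r (h j))) //
    𝕏.X.IsClosedPath p.1 ∧
    ∀ j : ZMod n, p.1 (j + 1) ≠ 𝕏.X.bar (p.1 j) ∨ p.2 (j + 1) ≠ 1}

end GraphOfGroups

/-! A closed reduced path of length `n` is a closed cyclic half-edge sequence `h` together with
group labels, and the reducedness condition at step `j` constrains only the label at `h (j + 1)`.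
So, for fixed closed `h`, the labels are counted by a product of local factors: `c(v) - 1` at a
backtrack `h (j + 1) = h̄ j` (the label must be nontrivial) and `c(v)` otherwise, which is exactly
`W (h j) (h (j + 1))`; for non-closed `h` some factor of `W` vanishes. Summing over all cyclic
sequences gives `∑_h ∏_j W (h j) (h (j + 1)) = tr (W ^ n)`. -/

open Finset Matrix

theorem Fin.cons_add_one_eq_snoc {α : Type*} {n : ℕ} (a : α) (f : Fin n → α) (j : Fin (n + 1)) :
    (Fin.cons a f : Fin (n + 1) → α) (j + 1) = (Fin.snoc f a : Fin (n + 1) → α) j := by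
  induction j using Fin.lastCases with
  | last => simp
  | cast k => rw [Fin.coeSucc_eq_succ, Fin.cons_succ, Fin.snoc_castSucc]

namespace Matrix

variable {ι R : Type*} [Fintype ι] [DecidableEq ι] [CommSemiring R]

theorem pow_succ_apply_eq_sum_prod (A : Matrix ι ι R) (n : ℕ) (a b : ι) :
    (A ^ (n + 1)) a b =
      ∑ f : Fin n → ι, ∏ i : Fin (n + 1),
        A ((Fin.cons a f : Fin (n + 1) → ι) i) ((Fin.snoc f b : Fin (n + 1) → ι) i) := by
  induction n generalizing a with
  | zero => simp [Fin.snoc]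
  | succ n ih =>
    rw [pow_succ', mul_apply, ← (Fin.consEquiv fun _ ↦ ι).sum_comp, Fintype.sum_prod_type]
    refine sum_congr rfl fun c _ ↦ ?_
    rw [ih, mul_sum]
    refine sum_congr rfl fun f _ ↦ ?_
    change _ = ∏ i : Fin (n + 2), A ((Fin.cons a (Fin.cons c f) : Fin (n + 2) → ι) i)
      ((Fin.snoc (Fin.cons c f) b : Fin (n + 2) → ι) i)
    rw [← Fin.cons_snoc_eq_snoc_cons, Fin.prod_univ_succ (n := n + 1)]
    simp only [Fin.cons_zero, Fin.cons_succ]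

theorem trace_pow_succ_eq_sum_prod (A : Matrix ι ι R) (n : ℕ) :
    trace (A ^ (n + 1)) = ∑ g : Fin (n + 1) → ι, ∏ j, A (g j) (g (j + 1)) := by
  rw [← (Fin.consEquiv fun _ ↦ ι).sum_comp, Fintype.sum_prod_type]
  refine sum_congr rfl fun a _ ↦ ?_
  rw [diag_apply, pow_succ_apply_eq_sum_prod]
  simp [Fin.cons_add_one_eq_snoc]

end Matrix

theorem Nat.card_subtype_not_or_ne {α : Type*} [Finite α] (p : Prop) [Decidable p] (a : α) :
    (Nat.card {x : α // ¬p ∨ x ≠ a} : ℤ) = if p then (Nat.card α : ℤ) - 1 else Nat.card α := by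
  classical
  have := Fintype.ofFinite α
  split_ifs with hp
  · simp only [hp, not_true_eq_false, false_or, Nat.card_eq_fintype_card]
    rw [Fintype.card_subtype_compl, Fintype.card_subtype_eq,
      Nat.cast_sub (Fintype.card_pos_iff.mpr ⟨a⟩), Nat.cast_one]
  · simp only [hp, not_false_eq_true, true_or, Nat.card_eq_fintype_card, Fintype.card_subtype_true]

namespace GraphOfGroups

variable (𝕏 : GraphOfGroups)

theorem Wmat_apply_of_r_eq {h h' : 𝕏.X.H} (hr : 𝕏.X.r (𝕏.X.bar h) = 𝕏.X.r h') :
    𝕏.Wmat h h' =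
      if h' = 𝕏.X.bar h then (𝕏.charge (𝕏.X.r h') : ℤ) - 1 else 𝕏.charge (𝕏.X.r h') := by
  rw [Wmat]
  split_ifs <;> rfl

theorem Wmat_apply_of_r_ne {h h' : 𝕏.X.H} (hr : 𝕏.X.r (𝕏.X.bar h) ≠ 𝕏.X.r h') :
    𝕏.Wmat h h' = 0 := by
  rw [Wmat, if_neg fun e ↦ hr (congrArg 𝕏.X.r e).symm, if_neg hr]

theorem card_admissible_labels_eq_Wmat {h h' : 𝕏.X.H} (hr : 𝕏.X.r (𝕏.X.bar h) = 𝕏.X.r h') :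
    (Nat.card {x : 𝕏.Gp (𝕏.X.r h') // h' ≠ 𝕏.X.bar h ∨ x ≠ 1} : ℤ) = 𝕏.Wmat h h' := by
  rw [Nat.card_subtype_not_or_ne, Wmat_apply_of_r_eq _ hr, charge, Nat.card_eq_fintype_card]

variable {n : ℕ} [NeZero n]

theorem card_reduced_labels_eq_prod_Wmat (h : ZMod n → 𝕏.X.H) (hc : 𝕏.X.IsClosedPath h) :
    (Nat.card {g : (j : ZMod n) → 𝕏.Gp (𝕏.X.r (h j)) //
        ∀ j, h (j + 1) ≠ 𝕏.X.bar (h j) ∨ g (j + 1) ≠ 1} : ℤ) =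
      ∏ j, 𝕏.Wmat (h j) (h (j + 1)) := by
  have hshift : ∀ g : (j : ZMod n) → 𝕏.Gp (𝕏.X.r (h j)),
      (∀ j, h (j + 1) ≠ 𝕏.X.bar (h j) ∨ g (j + 1) ≠ 1) ↔
        ∀ i, h i ≠ 𝕏.X.bar (h (i - 1)) ∨ g i ≠ 1 := fun g ↦
    (Equiv.addRight 1).forall_congr fun j ↦ by rw [Equiv.coe_addRight, add_sub_cancel_right]
  rw [Nat.card_congr ((Equiv.subtypeEquivRight hshift).trans (Equiv.subtypePiEquivPi
    (p := fun i x ↦ h i ≠ 𝕏.X.bar (h (i - 1)) ∨ x ≠ 1))), Nat.card_pi, Nat.cast_prod]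
  refine (Fintype.prod_equiv (Equiv.addRight 1) _ _ fun j ↦ ?_).symm
  simp only [Equiv.coe_addRight, add_sub_cancel_right]
  exact (𝕏.card_admissible_labels_eq_Wmat (hc j).symm).symm

theorem card_labels_eq_prod_Wmat (h : ZMod n → 𝕏.X.H) :
    (Nat.card {g : (j : ZMod n) → 𝕏.Gp (𝕏.X.r (h j)) // 𝕏.X.IsClosedPath h ∧
        ∀ j, h (j + 1) ≠ 𝕏.X.bar (h j) ∨ g (j + 1) ≠ 1} : ℤ) =
      ∏ j, 𝕏.Wmat (h j) (h (j + 1)) := by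
  by_cases hc : 𝕏.X.IsClosedPath h
  · simpa only [hc, true_and] using 𝕏.card_reduced_labels_eq_prod_Wmat h hc
  · obtain ⟨j, hj⟩ := not_forall.mp hc
    rw [prod_eq_zero (mem_univ j) (𝕏.Wmat_apply_of_r_ne fun e ↦ hj e.symm), Nat.cast_eq_zero,
      Nat.card_eq_zero]
    exact Or.inl ⟨fun g ↦ hc g.2.1⟩

theorem card_CRPath_eq_sum_prod_Wmat :
    (Nat.card (𝕏.CRPath n) : ℤ) = ∑ h : ZMod n → 𝕏.X.H, ∏ j, 𝕏.Wmat (h j) (h (j + 1)) := by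
  let e : 𝕏.CRPath n ≃ Σ h : ZMod n → 𝕏.X.H, {g : (j : ZMod n) → 𝕏.Gp (𝕏.X.r (h j)) //
      𝕏.X.IsClosedPath h ∧ ∀ j, h (j + 1) ≠ 𝕏.X.bar (h j) ∨ g (j + 1) ≠ 1} :=
    ⟨fun p ↦ ⟨p.1.1, p.1.2, p.2⟩, fun q ↦ ⟨⟨q.1, q.2.1⟩, q.2.2⟩, fun _ ↦ rfl, fun _ ↦ rfl⟩
  rw [Nat.card_congr e, Nat.card_sigma, Nat.cast_sum]
  exact sum_congr rfl fun h _ ↦ 𝕏.card_labels_eq_prod_Wmat h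

end GraphOfGroups

/-- two-term determinant formula. For a finite edge-trivial graph of
groups `𝕏` with half-edge adjacency matrix `W`, the number `C_n` of closed reduced
paths of length `n` equals `tr(W^n)` for all `n ≥ 1`; equivalently
`ζ(u,𝕏)⁻¹ = det(I_k - Wu)`. -/
theorem gog_two_term (𝕏 : GraphOfGroups) (n : ℕ) (hn : 1 ≤ n) :
    (Nat.card (𝕏.CRPath n) : ℤ) = Matrix.trace (𝕏.Wmat ^ n) := by
  obtain ⟨m, rfl⟩ := Nat.exists_eq_add_of_le' hn
  rw [𝕏.card_CRPath_eq_sum_prod_Wmat, trace_pow_succ_eq_sum_prod]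
  -- `ZMod (m + 1)` is definitionally `Fin (m + 1)`, with the same `+` and `1`.
  rfl
end

section
/- Let 𝕏 be a finite edge-trivial graph of groups with n vertices, m edges, and l legs. Then ζ(u,𝕏)^{-1} = (1-u^2)^{b_1(X)-1} (1+u)^l det(I_n - CAu + (CQ - I_n)u^2), where b_1(X) = m - n + 1. -/
open Polynomial

namespace LegGraph

/-- number of legs (half-edges fixed by the involution) -/
def numLegs (X : LegGraph) : ℕ := Fintype.card {h : X.H // X.bar h = h}

/-- number of edges: `card H = 2m + l`, so `m = (card H - l)/2` -/
def numEdges (X : LegGraph) : ℕ := (Fintype.card X.H - X.numLegs) / 2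

/-- the adjacency matrix of a graph with legs:
`A_{uv} = #{half-edges h : r(h) = u, r(h̄) = v}` -/
def adjMat (X : LegGraph) : Matrix X.V X.V ℤ := fun u v =>
  (Fintype.card {h : X.H // X.r h = u ∧ X.r (X.bar h) = v} : ℤ)

/-- the diagonal valency matrix -/
def valMat (X : LegGraph) : Matrix X.V X.V ℤ :=
  Matrix.diagonal fun v => (Fintype.card {h : X.H // X.r h = v} : ℤ)

end LegGraph

namespace GraphOfGroups

/-- The diagonal charge matrix. -/
def chargeMat (𝕏 : GraphOfGroups) : Matrix 𝕏.X.V 𝕏.X.V ℤ :=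
  Matrix.diagonal fun v => (𝕏.charge v : ℤ)

end GraphOfGroups

/-!
Let `J` be the permutation matrix of `h ↦ h̄`, `S` the vertex/half-edge incidence matrix and `C`
the charge matrix. Then `W = (J Sᵀ)(C S) - J` with `J² = 1`, so `(1 + uJ)(1 - uJ) = 1 - u²` factors
`1 - uW` as `(1 + uJ)` times `1 - u P C S`, `P = (1 - u²)⁻¹ (1 - uJ) J Sᵀ`. Sylvester's identity
turns the second factor into an `n × n` determinant, equal to `det(1 - CAu + (CQ - 1)u²)` because
`S J Sᵀ = A` and `S Sᵀ = Q`, while `det(1 + uJ)` contributes `1 + u` per leg and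
`det [[1, u], [u, 1]] = 1 - u²` per edge. Instead of inverting `1 - u²` we multiply through by it
and cancel at the end, since it is a non-zero-divisor in `ℤ[X]`.
-/
namespace Matrix

variable {m n R : Type*} [Fintype m] [Fintype n] [DecidableEq m] [DecidableEq n] [CommRing R]

theorem pow_card_mul_det_smul_one_sub_mul_comm (t : R) (A : Matrix m n R) (B : Matrix n m R) :
    t ^ Fintype.card n * det (t • 1 - A * B) = t ^ Fintype.card m * det (t • 1 - B * A) := by
  simpa [eval_charpoly, smul_one_eq_diagonal] using congrArg (eval t) (charpoly_mul_comm' A B)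

theorem det_one_sub_smul_mul_sub_of_mul_self_eq_one {J : Matrix m m R} (hJ : J * J = 1)
    (E : Matrix m n R) (D : Matrix n m R) {u : R} (hu : IsRegular (1 - u ^ 2)) :
    (1 - u ^ 2) ^ Fintype.card n * det (1 - u • (E * D - J)) =
      det (1 + u • J) * det (1 - u • (D * E) + u ^ 2 • (D * J * E - 1)) := by
  set t := 1 - u ^ 2
  set M := u • ((1 - u • J) * E)
  -- `(1 + uJ)(1 - uJ) = t`
  have hfactor : t • (1 - u • (E * D - J)) = (1 + u • J) * (t • 1 - M * D) := by
    simp only [M, t, Matrix.mul_sub, Matrix.sub_mul, Matrix.add_mul, Matrix.mul_smul,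
      Matrix.smul_mul, Matrix.mul_one, Matrix.one_mul, ← Matrix.mul_assoc, hJ, smul_sub, smul_add]
    module
  have hswap : t • 1 - D * M = 1 - u • (D * E) + u ^ 2 • (D * J * E - 1) := by
    simp only [M, t, Matrix.mul_sub, Matrix.sub_mul, Matrix.mul_smul, Matrix.smul_mul,
      Matrix.one_mul, ← Matrix.mul_assoc, smul_sub]
    module
  apply (hu.pow (Fintype.card m)).left
  calc t ^ Fintype.card m * (t ^ Fintype.card n * det (1 - u • (E * D - J)))
      = t ^ Fintype.card n * det (t • (1 - u • (E * D - J))) := by rw [det_smul]; ring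
    _ = det (1 + u • J) * (t ^ Fintype.card n * det (t • 1 - M * D)) := by
      rw [hfactor, det_mul]; ring
    _ = t ^ Fintype.card m * (det (1 + u • J) * det (t • 1 - D * M)) := by
      rw [pow_card_mul_det_smul_one_sub_mul_comm]; ring
    _ = _ := by rw [hswap]

end Matrix

open Function Matrix

section Involution

variable {H : Type*} [LinearOrder H] (f : H → H)

def involutionSplit : {h // f h = h} ⊕ ({h // h < f h} ⊕ {h // h < f h}) → H
  | .inl x => x
  | .inr (.inl p) => p
  | .inr (.inr p) => f p

variable {f}

theorem involutionSplit_sumComm (hf : Involutive f)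
    (a : {h // f h = h} ⊕ ({h // h < f h} ⊕ {h // h < f h})) :
    involutionSplit f (Equiv.sumCongr (Equiv.refl _) (Equiv.sumComm _ _) a) =
      f (involutionSplit f a) := by
  rcases a with x | p | p
  · exact x.2.symm
  · rfl
  · exact (hf p).symm

theorem involutionSplit_bijective (hf : Involutive f) : Bijective (involutionSplit f) := by
  constructor
  · have hf' : ∀ x, f (f x) = x := hf
    rintro (⟨x, hx⟩ | ⟨p, hp⟩ | ⟨p, hp⟩) (⟨y, hy⟩ | ⟨q, hq⟩ | ⟨q, hq⟩) h <;>
      grind [involutionSplit]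
  · intro h
    rcases lt_trichotomy h (f h) with hlt | heq | hgt
    · exact ⟨.inr (.inl ⟨h, hlt⟩), rfl⟩
    · exact ⟨.inl ⟨h, heq.symm⟩, rfl⟩
    · exact ⟨.inr (.inr ⟨f h, by rwa [hf]⟩), hf h⟩

end Involution

theorem Matrix.det_one_add_smul_permMatrix_of_involutive {H R : Type*} [Fintype H]
    [DecidableEq H] [CommRing R] {f : H → H} (hf : Involutive f) (u : R) :
    det (1 + u • (hf.toPerm f).permMatrix R) =
      (1 + u) ^ Fintype.card {h // f h = h} *
        (1 - u ^ 2) ^ ((Fintype.card H - Fintype.card {h // f h = h}) / 2) := by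
  -- any linear order picks one point `h < f h` out of each 2-cycle
  let _ : LinearOrder H := LinearOrder.lift' _ (Fintype.equivFin H).injective
  set e := Equiv.ofBijective _ (involutionSplit_bijective hf)
  have hcard : (Fintype.card H - Fintype.card {h // f h = h}) / 2 =
      Fintype.card {h // h < f h} := by
    rw [← Fintype.card_congr e, Fintype.card_sum, Fintype.card_sum]; omega
  have hblocks : (1 + u • (hf.toPerm f).permMatrix R).submatrix e e =
      fromBlocks ((1 + u) • 1) 0 0 (fromBlocks 1 (u • 1) (u • 1) 1) := by
    ext a b
    simp only [submatrix_apply, add_apply, smul_apply, one_apply, PEquiv.toMatrix_apply,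
      Equiv.toPEquiv_apply, e, Equiv.ofBijective_apply, Involutive.coe_toPerm,
      ← involutionSplit_sumComm hf, Option.mem_def, Option.some_inj,
      (involutionSplit_bijective hf).injective.eq_iff]
    rcases a with x | p | p <;> rcases b with y | q | q <;> simp [one_apply, ite_add_ite]
  have hedges :
      (1 : Matrix {h // h < f h} {h // h < f h} R) - u • 1 * u • 1 = (1 - u ^ 2) • 1 := by
    rw [sub_smul, one_smul, smul_mul_smul_comm, Matrix.one_mul, sq]
  rw [← det_submatrix_equiv_self e, hblocks, det_fromBlocks_zero₂₁, det_fromBlocks_one₁₁, hcard,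
    hedges, det_smul, det_one, mul_one, det_smul, det_one, mul_one]

namespace LegGraph

variable (X : LegGraph)

def incMat : Matrix X.V X.H ℤ := of fun v h => if X.r h = v then 1 else 0

abbrev barPerm : Equiv.Perm X.H := Involutive.toPerm X.bar X.bar_bar

theorem barPerm_apply (h : X.H) : X.barPerm h = X.bar h := rfl

theorem barPerm_permMatrix_mul_self : X.barPerm.permMatrix ℤ * X.barPerm.permMatrix ℤ = 1 := by
  rw [← permMatrix_mul, show X.barPerm * X.barPerm = 1 from Equiv.ext X.bar_bar, permMatrix_one]

theorem barPerm_permMatrix_mul_incMat_transpose :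
    X.barPerm.permMatrix ℤ * X.incMatᵀ = of fun h v => if X.r (X.bar h) = v then 1 else 0 := by
  rw [PEquiv.toMatrix_toPEquiv_mul]
  ext h v
  simp [incMat, barPerm_apply]

theorem incMat_mul_transpose : X.incMat * X.incMatᵀ = X.valMat := by
  ext a b
  simp only [incMat, valMat, mul_apply, transpose_apply, of_apply, diagonal_apply, mul_boole,
    ← ite_and, Finset.sum_boole, Fintype.card_subtype]
  by_cases hab : a = b
  · simp [hab]
  · simp [hab, show ∀ h, ¬(X.r h = b ∧ X.r h = a) from fun h ⟨hb, ha⟩ => hab (ha.symm.trans hb)]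

theorem incMat_mul_barPerm_mul_transpose :
    X.incMat * (X.barPerm.permMatrix ℤ * X.incMatᵀ) = X.adjMat := by
  rw [barPerm_permMatrix_mul_incMat_transpose]
  ext a b
  simp only [incMat, adjMat, mul_apply, of_apply, boole_mul, ← ite_and, Finset.sum_boole,
    Fintype.card_subtype]

end LegGraph

theorem GraphOfGroups.Wmat_eq (𝕏 : GraphOfGroups) :
    𝕏.Wmat = 𝕏.X.barPerm.permMatrix ℤ * 𝕏.X.incMatᵀ * (𝕏.chargeMat * 𝕏.X.incMat) -
      𝕏.X.barPerm.permMatrix ℤ := by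
  rw [LegGraph.barPerm_permMatrix_mul_incMat_transpose]
  ext h h'
  simp only [Wmat, chargeMat, LegGraph.incMat, Matrix.sub_apply, mul_apply, of_apply,
    PEquiv.toMatrix_apply, Equiv.toPEquiv_apply, LegGraph.barPerm_apply, Option.mem_def,
    Option.some_inj, boole_mul, mul_boole, Finset.sum_ite_eq, Finset.mem_univ, if_true]
  split_ifs <;> simp_all

/-- The polynomial variable `X` plays the role of `u`; both sides are multiplied by `(1-u²)^n`
to avoid the possibly negative exponent `b₁(X) - 1 = m - n`. -/
theorem gog_three_term (𝕏 : GraphOfGroups) :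
    (1 - X ^ 2) ^ (Fintype.card 𝕏.X.V) *
      Matrix.det (1 - (X : Polynomial ℤ) • (𝕏.Wmat.map Polynomial.C)) =
    (1 - X ^ 2) ^ 𝕏.X.numEdges * (1 + X) ^ 𝕏.X.numLegs *
      Matrix.det
        (1 - (X : Polynomial ℤ) • ((𝕏.chargeMat * 𝕏.X.adjMat).map Polynomial.C) +
          ((X : Polynomial ℤ) ^ 2) •
            (((𝕏.chargeMat * 𝕏.X.valMat).map Polynomial.C) - 1)) := by
  set J := 𝕏.X.barPerm.permMatrix ℤ
  set S := 𝕏.X.incMat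
  have hJ : J.map C * J.map C = 1 := by
    rw [← Matrix.map_mul, 𝕏.X.barPerm_permMatrix_mul_self, Matrix.map_one _ C.map_zero C.map_one]
  have hreg : IsRegular (1 - X ^ 2 : ℤ[X]) := IsRegular.of_ne_zero fun h => by
    simpa using congrArg (Polynomial.eval 0) h
  have hA : 𝕏.chargeMat * S * (J * Sᵀ) = 𝕏.chargeMat * 𝕏.X.adjMat := by
    rw [Matrix.mul_assoc, 𝕏.X.incMat_mul_barPerm_mul_transpose]
  have hQ : 𝕏.chargeMat * S * J * (J * Sᵀ) = 𝕏.chargeMat * 𝕏.X.valMat := by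
    rw [Matrix.mul_assoc, ← Matrix.mul_assoc J, 𝕏.X.barPerm_permMatrix_mul_self, Matrix.one_mul,
      Matrix.mul_assoc, 𝕏.X.incMat_mul_transpose]
  have hdet := det_one_sub_smul_mul_sub_of_mul_self_eq_one hJ ((J * Sᵀ).map C)
    ((𝕏.chargeMat * S).map C) hreg
  rw [← Matrix.map_mul, ← Matrix.map_sub _ (map_sub C), ← Matrix.map_mul, ← Matrix.map_mul,
    ← Matrix.map_mul, PEquiv.map_toMatrix, ← 𝕏.Wmat_eq, hA, hQ,
    det_one_add_smul_permMatrix_of_involutive 𝕏.X.bar_bar] at hdet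
  rw [hdet, LegGraph.numEdges, LegGraph.numLegs]
  ring
end

section
/- Let S, T be n×k matrices, J a k×k matrix, D a k×k matrix, and set W + J = ᵀT S D with SJ = T, TJ = S, ᵀJ = J. Then the block-matrix identity [[I_n, 0],[ᵀT, I_k]]·[[I_n(1-u^2), SDu],[0, I_k - (ᵀTSD - J)u]] = [[I_n - SDᵀTu + (SDᵀS - I_n)u^2, SDu],[0, I_k + Ju]]·[[I_n, 0],[ᵀT - ᵀSu, I_k]] holds, and consequently (1-u^2)^n det(I_k - (ᵀTSD - J)u) = det(I_n - SDᵀTu + (SDᵀS - I_n)u^2) det(I_k + Ju). -/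
/-! The block identity is checked blockwise; only the lower-left block needs the relations,
in the transposed form `J ᵀT = ᵀS`, `J ᵀS = ᵀT`. The two outer factors are block unitriangular,
hence of determinant 1, so taking determinants of the identity gives the determinant formula. -/

open Matrix

namespace Matrix

theorem mul_transpose_eq_transpose_of_mul_eq {R : Type*} [CommSemiring R] {m n : Type*} [Fintype n]
    {A B : Matrix m n R} {J : Matrix n n R} (hAJ : A * J = B) (hJ : Jᵀ = J) : J * Aᵀ = Bᵀ := by
  rw [← hAJ, transpose_mul, hJ]

variable {R : Type*} [CommRing R] {m n : Type*} [Fintype m] [Fintype n]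
  [DecidableEq m] [DecidableEq n]

theorem det_eq_det_of_fromBlocks_unitriangular_mul_eq {X Y : Matrix (m ⊕ n) (m ⊕ n) R}
    {C C' : Matrix n m R} (h : fromBlocks 1 0 C 1 * X = Y * fromBlocks 1 0 C' 1) :
    X.det = Y.det := by
  simpa [det_mul, det_fromBlocks_zero₁₂] using congrArg det h

theorem fromBlocks_bass_identity (u : R) (S T : Matrix m n R) (J D : Matrix n n R)
    (hJT : J * Tᵀ = Sᵀ) (hJS : J * Sᵀ = Tᵀ) :
    fromBlocks (1 : Matrix m m R) 0 Tᵀ (1 : Matrix n n R) *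
        fromBlocks ((1 - u ^ 2) • (1 : Matrix m m R)) (u • (S * D)) 0
          (1 - u • (Tᵀ * S * D - J)) =
      fromBlocks (1 - u • (S * D * Tᵀ) + u ^ 2 • (S * D * Sᵀ - 1)) (u • (S * D)) 0
          (1 + u • J) *
        fromBlocks (1 : Matrix m m R) 0 (Tᵀ - u • Sᵀ) (1 : Matrix n n R) := by
  simp only [fromBlocks_multiply, fromBlocks_inj, Matrix.one_mul, Matrix.mul_one,
    Matrix.mul_zero, Matrix.zero_mul, add_zero, zero_add, Matrix.add_mul,
    Matrix.mul_sub, Matrix.smul_mul, Matrix.mul_smul, Matrix.mul_assoc, hJT, hJS]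
  refine ⟨?_, ?_, ?_, ?_⟩ <;> module

end Matrix

/-- the block-matrix identity underlying Bass's three-term formula.
With `S, T : n×k`, `J, D : k×k` satisfying `SJ = T`, `TJ = S`, `ᵀJ = J`, and
`W := ᵀT S D - J` (so that `W + J = ᵀT S D`), the stated block identity holds, and
consequently `(1-u²)^n det(I_k - (ᵀTSD - J)u)
  = det(I_n - SDᵀTu + (SDᵀS - I_n)u²) · det(I_k + Ju)`. -/
theorem bass_block_identity {R : Type*} [CommRing R] (n k : ℕ) (u : R)
    (S T : Matrix (Fin n) (Fin k) R) (J D : Matrix (Fin k) (Fin k) R)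
    (hSJ : S * J = T) (hTJ : T * J = S) (hJ : Jᵀ = J) :
    (Matrix.fromBlocks (1 : Matrix (Fin n) (Fin n) R) 0 Tᵀ (1 : Matrix (Fin k) (Fin k) R) *
      Matrix.fromBlocks ((1 - u ^ 2) • (1 : Matrix (Fin n) (Fin n) R)) (u • (S * D))
        0 (1 - u • (Tᵀ * S * D - J)) =
    Matrix.fromBlocks
        (1 - u • (S * D * Tᵀ) + (u ^ 2) • (S * D * Sᵀ - 1)) (u • (S * D))
        0 (1 + u • J) *
      Matrix.fromBlocks (1 : Matrix (Fin n) (Fin n) R) 0 (Tᵀ - u • Sᵀ)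
        (1 : Matrix (Fin k) (Fin k) R)) ∧
    (1 - u ^ 2) ^ n * Matrix.det (1 - u • (Tᵀ * S * D - J)) =
      Matrix.det (1 - u • (S * D * Tᵀ) + (u ^ 2) • (S * D * Sᵀ - 1)) *
        Matrix.det (1 + u • J) := by
  have hblock := fromBlocks_bass_identity u S T J D
    (mul_transpose_eq_transpose_of_mul_eq hTJ hJ) (mul_transpose_eq_transpose_of_mul_eq hSJ hJ)
  refine ⟨hblock, ?_⟩
  have hdet := det_eq_det_of_fromBlocks_unitriangular_mul_eq hblock
  rwa [det_fromBlocks_zero₂₁, det_fromBlocks_zero₂₁, det_smul, det_one, Fintype.card_fin,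
    mul_one] at hdet
end

section
/- Let P and P' be closed paths in Y of the same length, where Y is a finite graph with an edge-free G-action and quotient graph of groups 𝕏. Then π(P) = π(P') if and only if P' = gP for some g ∈ G. -/
namespace LegGraph

def IsReducedPath (X : LegGraph) {n : ℕ} (h : ZMod n → X.H) : Prop :=
  ∀ j, h (j + 1) ≠ X.bar (h j)

def HasPeriod (X : LegGraph) {n : ℕ} (h : ZMod n → X.H) (d : ℕ) : Prop :=
  ∀ j, h (j + (d : ZMod n)) = h j

def IsPrimitive (X : LegGraph) {n : ℕ} (h : ZMod n → X.H) : Prop :=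
  ∀ d : ℕ, 0 < d → d ∣ n → X.HasPeriod h d → d = n

end LegGraph

/-- An edge-free Galois covering of graphs with legs: a group `G` acting on a finite
graph `Y`, freely on half-edges, together with the quotient graph `X = Y/G`, a lifted
spanning tree (recorded via the vertex section `vT`), a choice of identity sheet
(recorded via the half-edge section `sec`) and the Frobenius elements `F(h)`, as in
the construction of the quotient graph of groups `𝕏 = Y ⫽ G`. -/
structure EdgeFreeCover where
  Y : LegGraph
  G : Type
  [grpG : Group G]
  [finG : Fintype G]
  [decG : DecidableEq G]
  act : G → Y.H → Y.H
  actV : G → Y.V → Y.V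
  act_one : ∀ h, act 1 h = h
  act_mul : ∀ g g' h, act (g * g') h = act g (act g' h)
  actV_one : ∀ v, actV 1 v = v
  actV_mul : ∀ g g' v, actV (g * g') v = actV g (actV g' v)
  act_r : ∀ g h, Y.r (act g h) = actV g (Y.r h)
  act_bar : ∀ g h, Y.bar (act g h) = act g (Y.bar h)
  free : ∀ g h, act g h = h → g = 1
  X : LegGraph
  πV : Y.V → X.V
  πH : Y.H → X.H
  πV_surj : Function.Surjective πV
  πH_r : ∀ f, X.r (πH f) = πV (Y.r f)
  πH_bar : ∀ f, X.bar (πH f) = πH (Y.bar f)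
  πH_eq : ∀ f f', πH f = πH f' ↔ ∃ g, act g f = f'
  πV_eq : ∀ v v', πV v = πV v' ↔ ∃ g, actV g v = v'
  vT : X.V → Y.V
  vT_sec : ∀ v, πV (vT v) = v
  sec : X.H → Y.H
  sec_sec : ∀ h, πH (sec h) = h
  sec_root : ∀ h, Y.r (sec h) = vT (X.r h)
  F : X.H → G
  F_bar : ∀ h, F (X.bar h) = (F h)⁻¹
  F_spec : ∀ h, act (F h) (sec (X.bar h)) = Y.bar (sec h)

attribute [instance] EdgeFreeCover.grpG EdgeFreeCover.finG EdgeFreeCover.decG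

namespace EdgeFreeCover

variable (E : EdgeFreeCover)

/-- The sheet number `N(f)` of a half-edge `f` of `Y`: the unique `g ∈ G` with
`g · (π f)^S = f`. -/
noncomputable def N (f : E.Y.H) : E.G :=
  Classical.choose ((E.πH_eq (E.sec (E.πH f)) f).mp (E.sec_sec (E.πH f)))

/-- Membership in the vertex group `X_v` of the quotient graph of groups:
the stabilizer of the chosen lift `v^T`. -/
def InStab (v : E.X.V) (g : E.G) : Prop := E.actV g (E.vT v) = E.vT v

/-- A closed path of length `n` in the quotient graph of groups `𝕏 = Y ⫽ G`,
recorded cyclically: half-edges `h j` and group elements `γ j` (with `γ j` the group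
element immediately preceding `h j`), each lying in the vertex group at the root of
`h j`. -/
def IsClosedGPath {n : ℕ} (h : ZMod n → E.X.H) (γ : ZMod n → E.G) : Prop :=
  E.X.IsClosedPath h ∧ ∀ j, E.InStab (E.X.r (h j)) (γ j)

/-- The path `g₀h₁g₁⋯g_{n-1}h_n` is reduced if for every `j` either `h_{j+1} ≠ h̄_j`
or the intervening group element is nontrivial. -/
def IsReducedGPath {n : ℕ} (h : ZMod n → E.X.H) (γ : ZMod n → E.G) : Prop :=
  ∀ j, h (j + 1) ≠ E.X.bar (h j) ∨ γ (j + 1) ≠ 1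

/-- A closed path in `𝕏` has period `d` if it is invariant under rotation by `d`. -/
def GPathHasPeriod {n : ℕ} (h : ZMod n → E.X.H) (γ : ZMod n → E.G) (d : ℕ) : Prop :=
  ∀ j, h (j + (d : ZMod n)) = h j ∧ γ (j + (d : ZMod n)) = γ j

/-- A closed path in `𝕏` is primitive if it is not a proper power. -/
def GPathIsPrimitive {n : ℕ} (h : ZMod n → E.X.H) (γ : ZMod n → E.G) : Prop :=
  ∀ d : ℕ, 0 < d → d ∣ n → E.GPathHasPeriod h γ d → d = n

/-- The Frobenius element `F(P) = g₀F(h₁)g₁F(h₂)⋯g_{n-1}F(h_n)` of a closed path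
in `𝕏` (with chosen basepoint). -/
def Frob {n : ℕ} (h : ZMod n → E.X.H) (γ : ZMod n → E.G) : E.G :=
  (((List.range n).map fun i => γ (i : ZMod n) * E.F (h (i : ZMod n)))).prod

/-- The lift `π⁻¹(Q, s)` of a closed path `Q` in `𝕏` starting on the `s`-th sheet:
its `j`-th half-edge is `s · F(g₀h₁⋯h_j g_j) · h_{j+1}^S`. -/
def liftPath {n : ℕ} (h : ZMod n → E.X.H) (γ : ZMod n → E.G) (s : E.G)
    (j : ZMod n) : E.Y.H :=
  E.act (s * (((List.range j.val).map fun i => γ (i : ZMod n) * E.F (h (i : ZMod n)))).prod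
      * γ j) (E.sec (h j))

/-- The half-edge components of the image `π(P)` of a closed path `P` in `Y`. -/
def imgH {n : ℕ} (f : ZMod n → E.Y.H) (j : ZMod n) : E.X.H := E.πH (f j)

/-- The group components of the image `π(P)` of a closed path `P` in `Y`:
`g_j = F(h_j)⁻¹ N(f_j)⁻¹ N(f_{j+1})` (cyclically, with `g₀ = F(h_n)⁻¹N(f_n)⁻¹N(f₁)`). -/
noncomputable def imgG {n : ℕ} (f : ZMod n → E.Y.H) (j : ZMod n) : E.G :=
  (E.F (E.πH (f (j - 1))))⁻¹ * (E.N (f (j - 1)))⁻¹ * E.N (f j)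

end EdgeFreeCover

/-!
The sheet number is equivariant, `N(g f) = g N(f)`, so translating `P` by `g` leaves every
`h_j = π(f_j)` and every `g_j` unchanged. Conversely, if the images agree then `π(f_j) = π(f'_j)`,
so `f'_j = s_j f_j` for the sheet shift `s_j = N(f'_j) N(f_j)⁻¹`; equality of the `g_j` says exactly
that `s_{j+1} = s_j`, and going once around the cycle makes `s` constant.
-/

lemma ZMod.apply_eq_apply_zero_of_apply_add_one {α : Type*} {n : ℕ} {φ : ZMod n → α}
    (hφ : ∀ j, φ (j + 1) = φ j) (j : ZMod n) : φ j = φ 0 := by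
  obtain ⟨k, rfl⟩ := ZMod.intCast_surjective j
  induction k using Int.induction_on with
  | zero => simp
  | succ k ih => rw [Int.cast_add, Int.cast_one, hφ, ih]
  | pred k ih => rw [← ih, ← hφ, Int.cast_sub, Int.cast_one, sub_add_cancel]

namespace EdgeFreeCover

variable (E : EdgeFreeCover)

lemma act_N_sec (f : E.Y.H) : E.act (E.N f) (E.sec (E.πH f)) = f :=
  Classical.choose_spec ((E.πH_eq (E.sec (E.πH f)) f).mp (E.sec_sec (E.πH f)))

lemma act_left_injective (x : E.Y.H) : Function.Injective (E.act · x) := by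
  intro g g' h
  have hfix : E.act (g'⁻¹ * g) x = x := by
    simp only [E.act_mul, h, ← E.act_mul, inv_mul_cancel, E.act_one]
  exact (inv_mul_eq_one.mp (E.free _ _ hfix)).symm

lemma πH_act (g : E.G) (x : E.Y.H) : E.πH (E.act g x) = E.πH x :=
  ((E.πH_eq x (E.act g x)).mpr ⟨g, rfl⟩).symm

lemma N_act (g : E.G) (x : E.Y.H) : E.N (E.act g x) = g * E.N x := by
  apply E.act_left_injective (E.sec (E.πH (E.act g x)))
  dsimp only
  rw [E.act_N_sec, E.πH_act, E.act_mul, E.act_N_sec]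

lemma act_N_mul_inv_N {f f' : E.Y.H} (h : E.πH f = E.πH f') :
    E.act (E.N f' * (E.N f)⁻¹) f = f' := by
  nth_rw 2 [← E.act_N_sec f]
  rw [← E.act_mul, inv_mul_cancel_right, h, E.act_N_sec]

lemma imgH_act {n : ℕ} (g : E.G) (f : ZMod n → E.Y.H) (j : ZMod n) :
    E.imgH (fun i => E.act g (f i)) j = E.imgH f j :=
  E.πH_act g (f j)

lemma imgG_act {n : ℕ} (g : E.G) (f : ZMod n → E.Y.H) (j : ZMod n) :
    E.imgG (fun i => E.act g (f i)) j = E.imgG f j := by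
  simp only [imgG, E.N_act, E.πH_act, mul_inv_rev, mul_assoc, inv_mul_cancel_left]

lemma N_mul_inv_N_add_one {n : ℕ} {f f' : ZMod n → E.Y.H} {j : ZMod n}
    (hH : E.πH (f j) = E.πH (f' j)) (hG : E.imgG f (j + 1) = E.imgG f' (j + 1)) :
    E.N (f' (j + 1)) * (E.N (f (j + 1)))⁻¹ = E.N (f' j) * (E.N (f j))⁻¹ := by
  simp only [imgG, add_sub_cancel_right, hH, mul_assoc, mul_right_inj] at hG
  rw [inv_mul_eq_iff_eq_mul.mp hG.symm]
  group

end EdgeFreeCover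

theorem image_eq_iff_translate_general (E : EdgeFreeCover) (n : ℕ)
    (f f' : ZMod n → E.Y.H) :
    ((∀ j, E.imgH f j = E.imgH f' j) ∧ (∀ j, E.imgG f j = E.imgG f' j)) ↔
      ∃ g : E.G, ∀ j, E.act g (f j) = f' j := by
  constructor
  · rintro ⟨hH, hG⟩
    have shift_const := ZMod.apply_eq_apply_zero_of_apply_add_one
      (φ := fun j => E.N (f' j) * (E.N (f j))⁻¹)
      fun j => E.N_mul_inv_N_add_one (hH j) (hG (j + 1))
    refine ⟨E.N (f' 0) * (E.N (f 0))⁻¹, fun j => ?_⟩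
    rw [← shift_const j]
    exact E.act_N_mul_inv_N (hH j)
  · rintro ⟨g, hg⟩
    obtain rfl : f' = fun j => E.act g (f j) := funext fun j => (hg j).symm
    exact ⟨fun j => (E.imgH_act g f j).symm, fun j => (E.imgG_act g f j).symm⟩

/-- Two closed paths `P, P'` of the same length in `Y` have the same image
in the quotient graph of groups `𝕏 = Y ⫽ G` if and only if `P' = gP` for some
`g ∈ G`. -/
theorem image_eq_iff_translate (E : EdgeFreeCover) (n : ℕ) (hn : 1 ≤ n)
    (f f' : ZMod n → E.Y.H)
    (hf : E.Y.IsClosedPath f) (hf' : E.Y.IsClosedPath f') :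
    ((∀ j, E.imgH f j = E.imgH f' j) ∧ (∀ j, E.imgG f j = E.imgG f' j)) ↔
      ∃ g : E.G, ∀ j, E.act g (f j) = f' j :=
  image_eq_iff_translate_general E n f f'
end

section
/- Let 𝔮 be a prime of the quotient graph of groups 𝕏 = Y//G with representative Q, and let f(𝔮) be the order of the Frobenius element F(Q) in G. Then every prime 𝔭 of Y lying over 𝔮 has residual degree exactly f(𝔮), i.e., π(P) = Q^{f(𝔮)} for any primitive path P representing 𝔭, and hence ℓ(𝔭) = f(𝔮)·ℓ(𝔮). -/
/-!
Along a path `P` lying over `Q`, the sheet numbers `N(P j)`, corrected by the vertex-group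
elements `γ` of `Q`, are the partial products of the factors `γᵢ F(hᵢ)` of the Frobenius
element, so one turn around `Q` multiplies them by a conjugate of `F(Q)`. Going `f` times
around closes `P` up, which forces `F(Q) ^ f = 1`; conversely after `orderOf F(Q)` turns both
the sheet and the image half-edge repeat, so `P` has that period and primitivity of `P`
forces `f = orderOf F(Q)`.
-/

section CyclicProduct

variable {G : Type*} {m : ℕ}

def cyclicProd [Monoid G] (u : ZMod m → G) (b : ZMod m) (k : ℕ) : G :=
  ((List.range k).map fun i => u (b + i)).prod

section Monoid

variable [Monoid G] (u : ZMod m → G)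

@[simp]
lemma cyclicProd_zero (b : ZMod m) : cyclicProd u b 0 = 1 := rfl

lemma cyclicProd_succ (b : ZMod m) (k : ℕ) :
    cyclicProd u b (k + 1) = cyclicProd u b k * u (b + k) := by
  simp [cyclicProd, List.range_succ]

lemma cyclicProd_add (b : ZMod m) (k₁ k₂ : ℕ) :
    cyclicProd u b (k₁ + k₂) = cyclicProd u b k₁ * cyclicProd u (b + k₁) k₂ := by
  induction k₂ with
  | zero => simp
  | succ k ih =>
    rw [← add_assoc, cyclicProd_succ, ih, cyclicProd_succ, mul_assoc, Nat.cast_add, add_assoc]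

lemma cyclicProd_mul_period (b : ZMod m) (e : ℕ) :
    cyclicProd u b (e * m) = cyclicProd u b m ^ e := by
  induction e with
  | zero => simp
  | succ e ih =>
    rw [add_one_mul, cyclicProd_add, ih, pow_succ, Nat.cast_mul, ZMod.natCast_self, mul_zero,
      add_zero]

/-- Rotating a full period: both sides are `cyclicProd u 0 (k + m)`. -/
lemma semiconjBy_cyclicProd (k : ℕ) :
    SemiconjBy (cyclicProd u 0 k) (cyclicProd u k m) (cyclicProd u 0 m) := by
  have h := cyclicProd_add u 0 m k
  rw [add_comm m k, cyclicProd_add, ZMod.natCast_self, zero_add, zero_add] at h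
  exact h

end Monoid

lemma orderOf_cyclicProd [Group G] (u : ZMod m → G) (b : ZMod m) :
    orderOf (cyclicProd u b m) = orderOf (cyclicProd u 0 m) := by
  rcases Nat.eq_zero_or_pos m with rfl | hm
  · simp
  · have : NeZero m := ⟨hm.ne'⟩
    rw [← ZMod.natCast_zmod_val b]
    exact (semiconjBy_cyclicProd u b.val).orderOf_eq _

variable [Monoid G] {n : ℕ} (hdvd : m ∣ n) {x : ZMod n → G} {t : ZMod m → G}

lemma apply_add_eq_mul_cyclicProd
    (hx : ∀ j, x (j + 1) = x j * t (ZMod.castHom hdvd (ZMod m) j)) (j : ZMod n) (k : ℕ) :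
    x (j + k) = x j * cyclicProd t (ZMod.castHom hdvd (ZMod m) j) k := by
  induction k with
  | zero => simp
  | succ k ih =>
    rw [Nat.cast_succ, ← add_assoc, hx, ih, cyclicProd_succ, mul_assoc, map_add, map_natCast]

lemma apply_add_mul_eq_mul_pow
    (hx : ∀ j, x (j + 1) = x j * t (ZMod.castHom hdvd (ZMod m) j)) (j : ZMod n) (e : ℕ) :
    x (j + (e * m : ℕ)) = x j * cyclicProd t (ZMod.castHom hdvd (ZMod m) j) m ^ e := by
  rw [apply_add_eq_mul_cyclicProd hdvd hx, cyclicProd_mul_period]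

end CyclicProduct

namespace EdgeFreeCover

variable (E : EdgeFreeCover)

lemma act_N_sec_πH (x : E.Y.H) : E.act (E.N x) (E.sec (E.πH x)) = x :=
  Classical.choose_spec ((E.πH_eq (E.sec (E.πH x)) x).mp (E.sec_sec (E.πH x)))

lemma eq_of_πH_eq_of_N_eq {x y : E.Y.H} (hπ : E.πH x = E.πH y) (hN : E.N x = E.N y) :
    x = y := by
  rw [← E.act_N_sec_πH x, ← E.act_N_sec_πH y, hπ, hN]

variable {m n : ℕ} (h : ZMod m → E.X.H) (γ : ZMod m → E.G)

lemma Frob_eq_cyclicProd : E.Frob h γ = cyclicProd (fun i => γ i * E.F (h i)) 0 m := by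
  simp [Frob, cyclicProd]

variable {h γ} {hdvd : m ∣ n} {P : ZMod n → E.Y.H}
  (himg : ∀ j : ZMod n,
    E.imgH P j = h (ZMod.castHom hdvd (ZMod m) j) ∧
    E.imgG P j = γ (ZMod.castHom hdvd (ZMod m) j))
include himg

lemma N_mul_inv_succ (j : ZMod n) :
    E.N (P (j + 1)) * (γ (ZMod.castHom hdvd (ZMod m) (j + 1)))⁻¹ =
      E.N (P j) * (γ (ZMod.castHom hdvd (ZMod m) j))⁻¹ *
        (γ (ZMod.castHom hdvd (ZMod m) j) * E.F (h (ZMod.castHom hdvd (ZMod m) j))) := by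
  have hg := (himg (j + 1)).2
  rw [imgG, add_sub_cancel_right, ← imgH, (himg j).1] at hg
  rw [← hg]
  group

lemma N_mul_inv_add_mul (j : ZMod n) (e : ℕ) :
    E.N (P (j + (e * m : ℕ))) * (γ (ZMod.castHom hdvd (ZMod m) (j + (e * m : ℕ))))⁻¹ =
      E.N (P j) * (γ (ZMod.castHom hdvd (ZMod m) j))⁻¹ *
        cyclicProd (fun i => γ i * E.F (h i)) (ZMod.castHom hdvd (ZMod m) j) m ^ e :=
  apply_add_mul_eq_mul_pow hdvd (x := fun j => E.N (P j) * (γ (ZMod.castHom hdvd (ZMod m) j))⁻¹)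
    (t := fun i => γ i * E.F (h i)) (E.N_mul_inv_succ himg) j e

lemma Frob_pow_eq_one {f : ℕ} (hn : n = f * m) : E.Frob h γ ^ f = 1 := by
  have hP := E.N_mul_inv_add_mul himg 0 f
  rw [← hn, ZMod.natCast_self, add_zero, map_zero, left_eq_mul] at hP
  rwa [Frob_eq_cyclicProd]

lemma hasPeriod_orderOf_Frob_mul : E.Y.HasPeriod P (orderOf (E.Frob h γ) * m) := by
  intro j
  set d := orderOf (E.Frob h γ)
  have hρ : ZMod.castHom hdvd (ZMod m) (j + (d * m : ℕ)) = ZMod.castHom hdvd (ZMod m) j := by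
    rw [map_add, map_natCast, Nat.cast_mul, ZMod.natCast_self, mul_zero, add_zero]
  have hpow : cyclicProd (fun i => γ i * E.F (h i)) (ZMod.castHom hdvd (ZMod m) j) m ^ d = 1 := by
    rw [← orderOf_dvd_iff_pow_eq_one, orderOf_cyclicProd, ← Frob_eq_cyclicProd]
  have hN := E.N_mul_inv_add_mul himg j d
  rw [hpow, mul_one, hρ, mul_left_inj] at hN
  refine E.eq_of_πH_eq_of_N_eq ?_ hN
  rw [← imgH, ← imgH, (himg _).1, (himg j).1, hρ]

end EdgeFreeCover

theorem residual_degree_eq_orderOf_frobenius_general (E : EdgeFreeCover)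
    (m f n : ℕ) (hm : 0 < m) (hn : n = f * m)
    (hdvd : m ∣ n)
    (P : ZMod n → E.Y.H)
    (hPp : E.Y.IsPrimitive P)
    (h : ZMod m → E.X.H) (γ : ZMod m → E.G)
    (himg : ∀ j : ZMod n,
      E.imgH P j = h (ZMod.castHom hdvd (ZMod m) j) ∧
      E.imgG P j = γ (ZMod.castHom hdvd (ZMod m) j)) :
    f = orderOf (E.Frob h γ) ∧ n = orderOf (E.Frob h γ) * m := by
  have hdvd_f : orderOf (E.Frob h γ) ∣ f := orderOf_dvd_of_pow_eq_one (E.Frob_pow_eq_one himg hn)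
  have hlen : orderOf (E.Frob h γ) * m = n :=
    hPp _ (Nat.mul_pos (orderOf_pos _) hm) (hn ▸ Nat.mul_dvd_mul_right hdvd_f m)
      (E.hasPeriod_orderOf_Frob_mul himg)
  exact ⟨Nat.eq_of_mul_eq_mul_right hm (hlen.trans hn).symm, hlen.symm⟩

/-- Let `𝔮` be a prime of `𝕏 = Y ⫽ G` with representative `Q` (a
primitive closed reduced path of length `m`), and let `𝔭` be a prime of `Y` lying over
`𝔮`, represented by a primitive closed reduced path `P` of length `n` with
`π(P) = Q^f` (encoded via the reduction map `ZMod n → ZMod m`, `n = f·m`). Then the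
residual degree `f` equals the order of the Frobenius element `F(Q)` in `G`, and hence
`ℓ(𝔭) = f(𝔮)·ℓ(𝔮)`. -/
theorem residual_degree_eq_orderOf_frobenius (E : EdgeFreeCover)
    (m f n : ℕ) (hm : 0 < m) (hf : 0 < f) (hn : n = f * m)
    (hdvd : m ∣ n)
    (P : ZMod n → E.Y.H)
    (hPc : E.Y.IsClosedPath P) (hPr : E.Y.IsReducedPath P)
    (hPp : E.Y.IsPrimitive P)
    (h : ZMod m → E.X.H) (γ : ZMod m → E.G)
    (hQc : E.IsClosedGPath h γ) (hQr : E.IsReducedGPath h γ)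
    (hQp : E.GPathIsPrimitive h γ)
    (himg : ∀ j : ZMod n,
      E.imgH P j = h (ZMod.castHom hdvd (ZMod m) j) ∧
      E.imgG P j = γ (ZMod.castHom hdvd (ZMod m) j)) :
    f = orderOf (E.Frob h γ) ∧ n = orderOf (E.Frob h γ) * m :=
  residual_degree_eq_orderOf_frobenius_general E m f n hm hn hdvd P hPp h γ himg
end

section
/- With n vertices, m edges, l legs in the quotient graph X, b_1(X) = m-n+1, and a degree-d representation ρ of G: L(u,ρ,Y/𝕏)^{-1} = (1-u^2)^{(b_1(X)-1)d} (1+u)^{l_{ρ,+}} (1-u)^{l_{ρ,-}} det(I_{nd} - C_ρ A_ρ u + (C_ρ Q_ρ - I_{nd})u^2), where l_{ρ,+} and l_{ρ,-} are the total numbers of +1 and -1 eigenvalues of the matrices ρ(F(l)) over all legs l. -/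
open Polynomial

namespace EdgeFreeCover

variable (E : EdgeFreeCover)

/-- The Artinized charge `c_ρ(v) = Σ_{g ∈ X_v} ρ(g)` of a vertex `v`. -/
noncomputable def artinCharge {d : ℕ} (ρ : E.G →* Matrix (Fin d) (Fin d) ℚ)
    (v : E.X.V) : Matrix (Fin d) (Fin d) ℚ :=
  ∑ᶠ g : {g : E.G // E.InStab v g}, ρ g.val

/-- The `kd × kd` Artinized half-edge matrix `W_ρ`. -/
noncomputable def artinW {d : ℕ} (ρ : E.G →* Matrix (Fin d) (Fin d) ℚ) :
    Matrix (E.X.H × Fin d) (E.X.H × Fin d) ℚ := fun p q =>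
  if q.1 = E.X.bar p.1 then
    ((E.artinCharge ρ (E.X.r q.1) - 1) * ρ (E.F q.1)) p.2 q.2
  else if E.X.r (E.X.bar p.1) = E.X.r q.1 then
    ((E.artinCharge ρ (E.X.r q.1)) * ρ (E.F q.1)) p.2 q.2
  else 0

/-- The `nd × nd` Artinized adjacency matrix, with blocks
`(A_ρ)_{uv} = Σ_{r(h)=u, r(h̄)=v} ρ(F(h))`. -/
noncomputable def artinA {d : ℕ} (ρ : E.G →* Matrix (Fin d) (Fin d) ℚ) :
    Matrix (E.X.V × Fin d) (E.X.V × Fin d) ℚ := fun p q =>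
  ∑ h ∈ Finset.univ.filter (fun h => E.X.r h = p.1 ∧ E.X.r (E.X.bar h) = q.1),
    ρ (E.F h) p.2 q.2

/-- The Artinized valency matrix `Q_ρ = Q ⊗ I_d`. -/
def artinQ (d : ℕ) : Matrix (E.X.V × Fin d) (E.X.V × Fin d) ℚ := fun p q =>
  if p = q then (Fintype.card {h : E.X.H // E.X.r h = p.1} : ℚ) else 0

/-- The block-diagonal Artinized charge matrix `C_ρ`. -/
noncomputable def artinC {d : ℕ} (ρ : E.G →* Matrix (Fin d) (Fin d) ℚ) :
    Matrix (E.X.V × Fin d) (E.X.V × Fin d) ℚ := fun p q =>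
  if p.1 = q.1 then (E.artinCharge ρ p.1) p.2 q.2 else 0

/-- The legs of the quotient graph `X`, as a finset of half-edges. -/
def legsFinset : Finset E.X.H := Finset.univ.filter fun h => E.X.bar h = h

/-- The number of edges of the quotient graph `X` (so `card H = 2m + l`). -/
def numEdgesX : ℕ := (Fintype.card E.X.H - E.legsFinset.card) / 2

end EdgeFreeCover

/-!
Write `W_ρ = T S - J`, where `T` is the (terminus) incidence matrix from half-edges to vertices,
`S = C_ρ · S₀` with `S₀` the origin incidence matrix weighted by `ρ(F h)`, and `J` the matrix of
the involution `h ↦ h̄` weighted by `ρ(F h̄)`. Since `J² = 1`,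
`1 - uW = (1 + uJ)(1 - u/(1-u²) · (1 - uJ) T S)`, and `det(1 - XY) = det(1 - YX)` moves the second
factor to the vertex side, where `S T = C_ρ A_ρ` and `S J T = C_ρ Q_ρ`. The factor `det(1 + uJ)`
splits along the orbits of the involution: an edge contributes `(1 - u²)^d` and a leg `l`
contributes `det(1 + u ρ(F l))`, and the product of the latter is `(1 + u)^{l₊} (1 - u)^{l₋}`
because `det(1 - uM)` is the reversed characteristic polynomial of `M`. Both sides being
polynomials, it suffices to compare them at the infinitely many `u ≠ ±1`.
-/

open Finset Matrix

theorem mul_one_add_eq_one_add_add_add {A : Type*} [Ring A] {a b c : A} (haa : a * a = 0)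
    (hbb : b * b = 0) (hac : a * c = 0) (hbc : b * c = 0) (hcb : c * b = 0) :
    (1 + a) * (1 - a * b) * (1 + c) * (1 + b) = 1 + a + b + c := by
  simp only [add_mul, mul_add, sub_mul, mul_sub, one_mul, mul_one, ← mul_assoc, haa, hac, hcb,
    zero_mul, mul_assoc a b, hbb, hbc, mul_zero]
  abel

namespace Polynomial

noncomputable def reverseMonoidHom (R : Type*) [Semiring R] [NoZeroDivisors R] : R[X] →* R[X] where
  toFun := reverse
  map_one' := by simpa using reverse_C (1 : R)
  map_mul' := reverse_mul_of_domain

theorem reverse_X_add_C {R : Type*} [Semiring R] (c : R) : reverse (X + C c) = 1 + C c * X := by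
  nontriviality R
  rw [reverse_add_C, natDegree_X, pow_one, ← one_mul X, reverse_mul_X, ← C_1, reverse_C, C_1,
    one_mul]

end Polynomial

theorem filter_sign_eq_zero {ι : Type*} [Fintype ι] [DecidableEq ι] {σ : ι → ι} {o : ι → SignType}
    (ho : ∀ i, o (σ i) = -o i) (hfix : ∀ i, o i = 0 → σ i = i) :
    filter (fun i => o i = 0) univ = filter (fun i => σ i = i) univ := by
  ext i
  simp only [mem_filter, mem_univ, true_and]
  refine ⟨hfix i, fun h => ?_⟩
  have := ho i
  rw [h] at this
  revert this
  cases o i <;> decide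

namespace Function.Involutive

variable {ι : Type*} [Fintype ι] {σ : ι → ι}

theorem exists_sign (hσ : Involutive σ) :
    ∃ o : ι → SignType, (∀ i, o (σ i) = -o i) ∧ ∀ i, o i = 0 → σ i = i := by
  let f : ι → ℤ := fun i => Fintype.equivFin ι i
  have hf : Injective f := fun i j h =>
    (Fintype.equivFin ι).injective (Fin.ext (by simpa [f] using h))
  refine ⟨fun i => SignType.sign (f (σ i) - f i), fun i => ?_, fun i hi => hf ?_⟩
  · beta_reduce
    rw [hσ i, ← neg_sub, Left.sign_neg]
  · simpa [sub_eq_zero] using hi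

theorem card_sign_eq_neg_one [DecidableEq ι] (hσ : Involutive σ) {o : ι → SignType}
    (ho : ∀ i, o (σ i) = -o i) (hfix : ∀ i, o i = 0 → σ i = i) :
    #{i | o i = -1} = (Fintype.card ι - #{i | σ i = i}) / 2 := by
  have hpos : #{i | o i = 1} = #{i | o i = -1} :=
    card_nbij' σ σ (fun i hi => by simp_all) (fun i hi => by simp_all)
      (fun i _ => hσ i) (fun i _ => hσ i)
  have hzero : #{i | o i = 0} = #{i | σ i = i} := by rw [filter_sign_eq_zero ho hfix]
  have hsum : Fintype.card ι = #{i | o i = 1} + #{i | o i = -1} + #{i | o i = 0} := by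
    rw [← card_univ, card_eq_sum_card_fiberwise (f := o) (t := univ) (by simp), SignType.univ_eq,
      sum_insert (by decide), sum_insert (by decide), sum_singleton]
    ring
  omega

end Function.Involutive

namespace Matrix

variable {ι κ ν m n R : Type*}

theorem comp_mul_comp [Fintype κ] [Fintype n] [CommRing R] (A : Matrix ι κ (Matrix n n R))
    (B : Matrix κ ν (Matrix n n R)) :
    comp ι κ n n R A * comp κ ν n n R B = comp ι ν n n R (A * B) := by
  ext
  simp only [comp_apply, mul_apply, sum_apply, Fintype.sum_prod_type]

theorem det_comp_diagonal [Fintype ι] [DecidableEq ι] [Fintype n] [DecidableEq n] [CommRing R]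
    (D : ι → Matrix n n R) :
    det (comp ι ι n n R (diagonal D)) = ∏ i, det (D i) := by
  rw [← det_blockDiagonal, ← det_reindex_self (Equiv.prodComm ι n)]
  congr 1
  ext ⟨i, k⟩ ⟨j, l⟩
  by_cases h : k = l <;> simp [blockDiagonal_apply, h]

theorem det_one_add_eq_one [Fintype m] [DecidableEq m] [CommRing R] {e a : Matrix m m R}
    (hea : e * a = a) (hae : a * e = 0) : det (1 + a) = 1 := by
  rw [← hea, det_one_add_mul_comm, hae, add_zero, det_one]

theorem det_one_sub_smul_mul_sub [Fintype m] [DecidableEq m] [Fintype ι] [DecidableEq ι]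
    {K : Type*} [Field K] (T : Matrix m ι K) (S : Matrix ι m K) (J : Matrix m m K)
    (hJ : J * J = 1) {t : K} (ht : t ^ 2 ≠ 1) :
    (1 - t ^ 2) ^ Fintype.card ι * det (1 - t • (T * S - J)) =
      det (1 + t • J) * det (1 - t • (S * T) + t ^ 2 • (S * J * T - 1)) := by
  have ht' : 1 - t ^ 2 ≠ 0 := sub_ne_zero.mpr (Ne.symm ht)
  set c := t / (1 - t ^ 2)
  have hc : c * (1 - t ^ 2) = t := div_mul_cancel₀ _ ht'
  have hJJ : (1 + t • J) * (1 - t • J) = (1 - t ^ 2) • 1 := by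
    simp only [add_mul, mul_sub, one_mul, mul_one, smul_mul_smul_comm, hJ, sub_smul, one_smul, sq]
    abel
  have hfactor : 1 - t • (T * S - J) = (1 + t • J) * (1 - c • ((1 - t • J) * T) * S) := by
    rw [Matrix.mul_sub, Matrix.mul_one, ← Matrix.mul_assoc, Matrix.mul_smul, ← Matrix.mul_assoc,
      hJJ, Matrix.smul_mul (1 - t ^ 2), Matrix.one_mul, smul_smul, hc, Matrix.smul_mul, smul_sub]
    abel
  have hswap : S * (c • ((1 - t • J) * T)) = c • (S * T - t • (S * J * T)) := by
    rw [Matrix.mul_smul, Matrix.sub_mul, Matrix.one_mul, Matrix.mul_sub, Matrix.smul_mul,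
      Matrix.mul_smul, Matrix.mul_assoc]
  have hscale : (1 - t ^ 2) • (1 - c • (S * T - t • (S * J * T))) =
      1 - t • (S * T) + t ^ 2 • (S * J * T - 1) := by
    rw [smul_sub _ 1, smul_smul, mul_comm, hc]
    module
  rw [hfactor, det_mul, det_one_sub_mul_comm, hswap, mul_left_comm, ← det_smul, hscale]

theorem eval_det_one_sub_X_smul [Fintype n] [DecidableEq n] [CommRing R] (A : Matrix n n R)
    (t : R) :
    eval t (det (1 - (X : R[X]) • A.map C)) = det (1 - t • A) := by
  rw [← coe_evalRingHom, RingHom.map_det]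
  congr 1
  ext i j
  simp [one_apply, apply_ite, mul_comm t]

theorem eval_det_one_sub_X_smul_add_X_sq_smul [Fintype n] [DecidableEq n] [CommRing R]
    (A B : Matrix n n R) (t : R) :
    eval t (det (1 - (X : R[X]) • A.map C + (X : R[X]) ^ 2 • (B.map C - 1))) =
      det (1 - t • A + t ^ 2 • (B - 1)) := by
  rw [← coe_evalRingHom, RingHom.map_det]
  congr 1
  ext i j
  by_cases h : i = j <;> simp [h, mul_comm t, mul_comm (t ^ 2)]

theorem prod_det_one_add_smul_of_prod_charpoly {α K : Type*} [Fintype n] [DecidableEq n]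
    [CommRing K] [IsDomain K] {s : Finset α} {M : α → Matrix n n K} {a b : ℕ}
    (h : ∏ i ∈ s, (M i).charpoly = (X - 1) ^ a * (X + 1) ^ b) (t : K) :
    ∏ i ∈ s, det (1 + t • M i) = (1 + t) ^ a * (1 - t) ^ b := by
  have hrev : ∏ i ∈ s, (M i).charpolyRev = (1 - X) ^ a * (1 + X) ^ b := by
    have h1 : reverse (X - 1 : K[X]) = 1 - X := by
      simpa [sub_eq_add_neg] using reverse_X_add_C (-1 : K)
    have h2 : reverse (X + 1 : K[X]) = 1 + X := by simpa using reverse_X_add_C (1 : K)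
    simp_rw [← reverse_charpoly]
    have := congrArg (reverseMonoidHom K) h
    rwa [map_prod, map_mul, map_pow, map_pow, reverseMonoidHom, MonoidHom.coe_mk, OneHom.coe_mk,
      h1, h2] at this
  simpa [charpolyRev, eval_prod, eval_det_one_sub_X_smul, ← sub_eq_add_neg] using
    congrArg (eval (-t)) hrev

section Involution

def involutionBlocks [DecidableEq ι] [Zero R] (σ : ι → ι) (M : ι → Matrix n n R) :
    Matrix ι ι (Matrix n n R) :=
  of fun i j => if j = σ i then M j else 0

def signProj [DecidableEq ι] [DecidableEq n] [Zero R] [One R] (o : ι → SignType) (s : SignType) :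
    Matrix ι ι (Matrix n n R) :=
  diagonal fun i => if o i = s then 1 else 0

variable [DecidableEq ι] [DecidableEq n] [CommRing R]
variable {σ : ι → ι} {M : ι → Matrix n n R} {o : ι → SignType}

theorem signProj_add_signProj_add_signProj :
    signProj (n := n) (R := R) o 1 + signProj o (-1) + signProj o 0 = 1 := by
  ext1 i j
  by_cases h : i = j
  · subst h
    cases h : o i <;> simp [signProj, h]
  · simp [signProj, h]

variable [Fintype ι] [Fintype n]

theorem involutionBlocks_mul_self (hσ : Function.Involutive σ) (hM : ∀ i, M (σ i) * M i = 1) :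
    involutionBlocks σ M * involutionBlocks σ M = 1 := by
  ext1 i k
  rw [mul_apply, Finset.sum_eq_single (σ i) (fun j _ hj => by simp [involutionBlocks, hj])
    (by simp)]
  by_cases hk : k = i
  · subst hk
    simp [involutionBlocks, hσ k, hM]
  · have : k ≠ σ (σ i) := by rwa [hσ i]
    simp [involutionBlocks, this, Ne.symm hk]

theorem signProj_mul_signProj (s s' : SignType) :
    signProj (n := n) (R := R) o s * signProj o s' = if s = s' then signProj o s else 0 := by
  split_ifs with h
  · subst h
    simp only [signProj, diagonal_mul_diagonal]
    congr 1
    ext i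
    split_ifs <;> simp
  · ext1 i j
    rw [signProj, signProj, diagonal_mul_diagonal]
    by_cases hi : o i = s
    · simp [hi, h, diagonal_apply]
    · simp [hi, diagonal_apply]

theorem signProj_mul_involutionBlocks (ho : ∀ i, o (σ i) = -o i) (s : SignType) :
    signProj o s * involutionBlocks σ M = involutionBlocks σ M * signProj o (-s) := by
  ext1 i j
  rw [signProj, signProj, diagonal_mul, mul_diagonal]
  by_cases hj : j = σ i
  · subst hj
    simp [involutionBlocks, ho, neg_inj]
  · simp [involutionBlocks, hj]

theorem involutionBlocks_mul_signProj (ho : ∀ i, o (σ i) = -o i) (s : SignType) :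
    involutionBlocks σ M * signProj o s = signProj o (-s) * involutionBlocks σ M := by
  rw [signProj_mul_involutionBlocks ho, neg_neg]

theorem signProj_mul_involutionBlocks_mul_self (hσ : Function.Involutive σ)
    (hM : ∀ i, M (σ i) * M i = 1) (ho : ∀ i, o (σ i) = -o i) (s s' : SignType) :
    signProj o s * involutionBlocks σ M * (signProj o s' * involutionBlocks σ M) =
      if s = -s' then signProj o s else 0 := by
  rw [Matrix.mul_assoc, ← Matrix.mul_assoc _ (signProj o s'), involutionBlocks_mul_signProj ho,
    Matrix.mul_assoc, involutionBlocks_mul_self hσ hM, Matrix.mul_one, signProj_mul_signProj]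

theorem signProj_zero_mul_involutionBlocks (hfix : ∀ i, o i = 0 → σ i = i) :
    signProj o 0 * involutionBlocks σ M = diagonal fun i => if o i = 0 then M i else 0 := by
  ext1 i j
  rw [signProj, diagonal_mul]
  by_cases hi : o i = 0
  · by_cases hj : j = i
    · subst hj
      simp [involutionBlocks, hi, hfix j hi]
    · simp [involutionBlocks, hi, hfix i hi, hj, Ne.symm hj]
  · simp [hi, diagonal_apply]

/-- The outer factors are unipotent and the two middle ones are block diagonal. -/
theorem one_add_smul_involutionBlocks_eq (hσ : Function.Involutive σ)
    (hM : ∀ i, M (σ i) * M i = 1) (ho : ∀ i, o (σ i) = -o i) (t : R) :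
    1 + t • involutionBlocks σ M =
      (1 + t • (signProj o (-1) * involutionBlocks σ M)) * (1 - t ^ 2 • signProj o (-1)) *
        (1 + t • (signProj o 0 * involutionBlocks σ M)) *
        (1 + t • (signProj o 1 * involutionBlocks σ M)) := by
  have hprod (s s' : SignType) :
      t • (signProj o s * involutionBlocks σ M) * (t • (signProj o s' * involutionBlocks σ M)) =
        if s = -s' then t ^ 2 • signProj o s else 0 := by
    rw [smul_mul_smul_comm, signProj_mul_involutionBlocks_mul_self hσ hM ho]
    split_ifs <;> simp [sq]
  have hzero (s s' : SignType) (h : s ≠ -s') :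
      t • (signProj o s * involutionBlocks σ M) * (t • (signProj o s' * involutionBlocks σ M)) =
        0 := by
    rw [hprod, if_neg h]
  have hab := hprod (-1) 1
  rw [if_pos rfl] at hab
  rw [← hab, mul_one_add_eq_one_add_add_add (hzero _ _ (by decide)) (hzero _ _ (by decide))
      (hzero _ _ (by decide)) (hzero _ _ (by decide)) (hzero _ _ (by decide)),
    add_assoc, add_assoc, ← smul_add, ← smul_add, ← Matrix.add_mul, ← Matrix.add_mul, ← add_assoc,
    add_comm (signProj o (-1)), signProj_add_signProj_add_signProj, Matrix.one_mul]

theorem det_comp_one_add_smul_signProj_mul_involutionBlocks (ho : ∀ i, o (σ i) = -o i)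
    {s : SignType} (hs : s ≠ 0) (t : R) :
    det (comp ι ι n n R (1 + t • (signProj o s * involutionBlocks σ M))) = 1 := by
  rw [← compRingEquiv_apply, map_add, map_one]
  refine det_one_add_eq_one (e := compRingEquiv ι n R (signProj o s)) ?_ ?_ <;> rw [← map_mul]
  · rw [Matrix.mul_smul, ← Matrix.mul_assoc, signProj_mul_signProj, if_pos rfl]
  · rw [Matrix.smul_mul, Matrix.mul_assoc, involutionBlocks_mul_signProj ho, ← Matrix.mul_assoc,
      signProj_mul_signProj, if_neg (by cases s <;> simp_all), zero_mul, smul_zero, map_zero]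

theorem det_one_add_smul_comp_involutionBlocks_of_sign (hσ : Function.Involutive σ)
    (hM : ∀ i, M (σ i) * M i = 1) (ho : ∀ i, o (σ i) = -o i) (hfix : ∀ i, o i = 0 → σ i = i)
    (t : R) :
    det (1 + t • comp ι ι n n R (involutionBlocks σ M)) =
      (1 - t ^ 2) ^ (#{i | o i = -1} * Fintype.card n) * ∏ i with o i = 0, det (1 + t • M i) := by
  have hpos := det_comp_one_add_smul_signProj_mul_involutionBlocks (M := M) ho (s := 1)
    (by decide) t
  have hneg := det_comp_one_add_smul_signProj_mul_involutionBlocks (M := M) ho (s := -1)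
    (by decide) t
  have hsub : 1 - t ^ 2 • signProj (n := n) (R := R) o (-1) =
      diagonal fun i => if o i = -1 then (1 - t ^ 2) • 1 else 1 := by
    rw [signProj, ← diagonal_one, ← diagonal_smul, diagonal_sub]
    congr 1
    ext1 i
    simp only [Pi.smul_apply]
    split_ifs <;> simp [sub_smul]
  have hadd : 1 + t • (signProj o 0 * involutionBlocks σ M) =
      diagonal fun i => if o i = 0 then 1 + t • M i else 1 := by
    rw [signProj_zero_mul_involutionBlocks hfix, ← diagonal_one, ← diagonal_smul, diagonal_add]
    congr 1
    ext1 i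
    simp only [Pi.smul_apply]
    split_ifs <;> simp
  rw [← compAlgEquiv_apply ι n R R, ← map_one (compAlgEquiv ι n R R), ← map_smul, ← map_add,
    one_add_smul_involutionBlocks_eq hσ hM ho t, map_mul, map_mul, map_mul, det_mul, det_mul,
    det_mul]
  simp only [compAlgEquiv_apply, hpos, hneg, hsub, hadd, det_comp_diagonal, one_mul, mul_one]
  simp only [apply_ite det, det_smul, det_one, mul_one, ← prod_filter, prod_const, ← pow_mul,
    mul_comm (Fintype.card n)]

theorem det_one_add_smul_comp_involutionBlocks (hσ : Function.Involutive σ)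
    (hM : ∀ i, M (σ i) * M i = 1) (t : R) :
    det (1 + t • comp ι ι n n R (involutionBlocks σ M)) =
      (1 - t ^ 2) ^ ((Fintype.card ι - #{i | σ i = i}) / 2 * Fintype.card n) *
        ∏ i with σ i = i, det (1 + t • M i) := by
  obtain ⟨o, ho, hfix⟩ := hσ.exists_sign
  rw [det_one_add_smul_comp_involutionBlocks_of_sign hσ hM ho hfix,
    hσ.card_sign_eq_neg_one ho hfix, filter_sign_eq_zero ho hfix]

end Involution

end Matrix

namespace LegGraph

variable (Γ : LegGraph) {n R : Type*}

def startBlocks [Zero R] (M : Γ.H → Matrix n n R) : Matrix Γ.V Γ.H (Matrix n n R) :=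
  of fun v h => if v = Γ.r h then M h else 0

/- `n` and `R` are explicit: otherwise a product `A * Γ.endBlocks` is elaborated before they are
known and picks up the `CStarMatrix` multiplication instance. -/
def endBlocks (n R : Type*) [DecidableEq n] [Zero R] [One R] : Matrix Γ.H Γ.V (Matrix n n R) :=
  of fun h v => if Γ.r (Γ.bar h) = v then 1 else 0

def adjacencyBlocks [AddCommMonoid R] (M : Γ.H → Matrix n n R) : Matrix Γ.V Γ.V (Matrix n n R) :=
  of fun u v => ∑ h with Γ.r h = u ∧ Γ.r (Γ.bar h) = v, M h

variable {Γ} [Fintype n] [DecidableEq n] [CommRing R]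

theorem startBlocks_mul_endBlocks (M : Γ.H → Matrix n n R) :
    Γ.startBlocks M * Γ.endBlocks n R = Γ.adjacencyBlocks M := by
  refine Matrix.ext fun u v => ?_
  simp only [Matrix.mul_apply, startBlocks, endBlocks, adjacencyBlocks, Matrix.of_apply, mul_ite,
    mul_one, mul_zero, sum_filter]
  refine sum_congr rfl fun h _ => ?_
  by_cases hu : u = Γ.r h <;> simp [hu, eq_comm]

theorem endBlocks_mul_diagonal_mul_startBlocks (c : Γ.V → Matrix n n R) (M : Γ.H → Matrix n n R) :
    Γ.endBlocks n R * (diagonal c * Γ.startBlocks M) =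
      of fun h h' => if Γ.r (Γ.bar h) = Γ.r h' then c (Γ.r h') * M h' else 0 := by
  refine Matrix.ext fun h h' => ?_
  rw [Matrix.mul_apply, sum_eq_single (Γ.r h')]
  · by_cases hr : Γ.r (Γ.bar h) = Γ.r h' <;> simp [endBlocks, startBlocks, hr]
  · intro v _ hv
    simp [startBlocks, hv]
  · simp

theorem card_filter_r_bar (v : Γ.V) :
    #{h | Γ.r (Γ.bar h) = v} = Fintype.card {h // Γ.r h = v} := by
  rw [Fintype.card_subtype]
  exact card_nbij' Γ.bar Γ.bar (fun h hh => by simpa using hh)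
    (fun h hh => by simpa [Γ.bar_bar] using hh) (fun h _ => Γ.bar_bar h)
    (fun h _ => Γ.bar_bar h)

theorem startBlocks_mul_involutionBlocks_mul_endBlocks {M : Γ.H → Matrix n n R}
    (hM : ∀ h, M (Γ.bar h) * M h = 1) :
    Γ.startBlocks M * involutionBlocks Γ.bar M * Γ.endBlocks n R =
      diagonal fun v => (Fintype.card {h // Γ.r h = v} : Matrix n n R) := by
  have hSJ : Γ.startBlocks M * involutionBlocks Γ.bar M =
      of fun v h => if v = Γ.r (Γ.bar h) then 1 else 0 := by
    refine Matrix.ext fun v h => ?_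
    rw [Matrix.mul_apply, sum_eq_single (Γ.bar h)]
    · simp [startBlocks, involutionBlocks, Γ.bar_bar, hM]
    · intro h' _ hh'
      have : h ≠ Γ.bar h' := fun e => hh' (by rw [e, Γ.bar_bar])
      simp [involutionBlocks, this]
    · simp
  rw [hSJ]
  refine Matrix.ext fun u v => ?_
  simp only [Matrix.mul_apply, endBlocks, Matrix.of_apply, ite_mul, one_mul, zero_mul,
    diagonal_apply]
  by_cases huv : u = v
  · subst huv
    rw [if_pos rfl, ← card_filter_r_bar, natCast_card_filter]
    refine sum_congr rfl fun h _ => ?_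
    by_cases hu : Γ.r (Γ.bar h) = u <;> simp [hu]
  · rw [if_neg huv]
    refine sum_eq_zero fun h _ => ?_
    split_ifs with h1 h2
    exacts [absurd (h1.trans h2) huv, rfl, rfl]

end LegGraph

namespace EdgeFreeCover

variable (E : EdgeFreeCover) {d : ℕ} (ρ : E.G →* Matrix (Fin d) (Fin d) ℚ)

theorem map_F_bar_mul_map_F (h : E.X.H) : ρ (E.F (E.X.bar h)) * ρ (E.F h) = 1 := by
  rw [← map_mul, E.F_bar, inv_mul_cancel, map_one]

theorem artinC_eq_comp : E.artinC ρ = comp _ _ _ _ _ (diagonal (E.artinCharge ρ)) := by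
  ext ⟨u, i⟩ ⟨v, j⟩
  by_cases h : u = v <;> simp [artinC, h]

theorem artinA_eq_comp :
    E.artinA ρ = comp _ _ _ _ _ (E.X.adjacencyBlocks fun h => ρ (E.F h)) := by
  ext ⟨u, i⟩ ⟨v, j⟩
  simp [artinA, LegGraph.adjacencyBlocks, Matrix.sum_apply]

theorem artinQ_eq_comp : E.artinQ d = comp _ _ _ _ _
    (diagonal fun v => (Fintype.card {h // E.X.r h = v} : Matrix (Fin d) (Fin d) ℚ)) := by
  ext ⟨u, i⟩ ⟨v, j⟩
  by_cases h : u = v <;> by_cases hij : i = j <;> simp [artinQ, Matrix.natCast_apply, h, hij]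

theorem artinW_eq_comp : E.artinW ρ =
    comp _ _ _ _ _ (E.X.endBlocks (Fin d) ℚ) *
      comp _ _ _ _ _ (diagonal (E.artinCharge ρ) * E.X.startBlocks fun h => ρ (E.F h)) -
    comp _ _ _ _ _ (involutionBlocks E.X.bar fun h => ρ (E.F h)) := by
  rw [comp_mul_comp, LegGraph.endBlocks_mul_diagonal_mul_startBlocks]
  ext ⟨h, i⟩ ⟨h', j⟩
  by_cases hb : h' = E.X.bar h
  · subst hb
    simp [artinW, involutionBlocks, sub_mul]
  · simp [artinW, involutionBlocks, hb, apply_ite (fun A : Matrix (Fin d) (Fin d) ℚ => A i j)]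

theorem det_one_sub_smul_artinW {t : ℚ} (ht : t ^ 2 ≠ 1) :
    (1 - t ^ 2) ^ (Fintype.card E.X.V * d) * det (1 - t • E.artinW ρ) =
      (1 - t ^ 2) ^ (E.numEdgesX * d) * (∏ l ∈ E.legsFinset, det (1 + t • ρ (E.F l))) *
        det (1 - t • (E.artinC ρ * E.artinA ρ) + t ^ 2 • (E.artinC ρ * E.artinQ d - 1)) := by
  have hM := E.map_F_bar_mul_map_F ρ
  set S := comp _ _ _ _ _ (diagonal (E.artinCharge ρ) * E.X.startBlocks fun h => ρ (E.F h))
  set T := comp _ _ _ _ _ (E.X.endBlocks (Fin d) ℚ)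
  set J := comp _ _ _ _ _ (involutionBlocks E.X.bar fun h => ρ (E.F h))
  have hST : S * T = E.artinC ρ * E.artinA ρ := by
    rw [comp_mul_comp, Matrix.mul_assoc, LegGraph.startBlocks_mul_endBlocks, artinC_eq_comp,
      artinA_eq_comp, comp_mul_comp]
  have hSJT : S * J * T = E.artinC ρ * E.artinQ d := by
    rw [comp_mul_comp, comp_mul_comp, Matrix.mul_assoc, Matrix.mul_assoc,
      ← Matrix.mul_assoc _ _ (E.X.endBlocks _ _),
      LegGraph.startBlocks_mul_involutionBlocks_mul_endBlocks hM, artinC_eq_comp,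
      artinQ_eq_comp, comp_mul_comp]
  have hJ : J * J = 1 := by
    rw [comp_mul_comp, involutionBlocks_mul_self E.X.bar_bar hM, Matrix.comp_one]
  have hdet := det_one_sub_smul_mul_sub T S J hJ ht
  rw [Fintype.card_prod, Fintype.card_fin, hST, hSJT,
    det_one_add_smul_comp_involutionBlocks E.X.bar_bar hM, Fintype.card_fin] at hdet
  rw [artinW_eq_comp, hdet, numEdgesX, legsFinset]

end EdgeFreeCover

/-- `l_{ρ,+}` and `l_{ρ,-}` enter through the factorization of `∏_l charpoly ρ(F l)`,
`L(u,ρ,Y/𝕏)⁻¹` through `det(1 - u W_ρ)`, and both sides carry an extra `(1 - u²)^{nd}` because the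
exponent `(b₁(X) - 1) d = (m - n) d` may be negative. -/
theorem L_three_term_general (E : EdgeFreeCover) {d : ℕ}
    (ρ : E.G →* Matrix (Fin d) (Fin d) ℚ)
    (a b : ℕ)
    (hchar : (∏ h ∈ E.legsFinset, Matrix.charpoly (ρ (E.F h))) =
      (X - 1) ^ a * (X + 1) ^ b) :
    (1 - X ^ 2) ^ (Fintype.card E.X.V * d) *
      Matrix.det (1 - (X : Polynomial ℚ) • ((E.artinW ρ).map Polynomial.C)) =
    (1 - X ^ 2) ^ (E.numEdgesX * d) * (1 + X) ^ a * (1 - X) ^ b *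
      Matrix.det
        (1 - (X : Polynomial ℚ) • ((E.artinC ρ * E.artinA ρ).map Polynomial.C) +
          ((X : Polynomial ℚ) ^ 2) •
            (((E.artinC ρ * E.artinQ d).map Polynomial.C) - 1)) := by
  refine eq_of_infinite_eval_eq _ _
    ((({1, -1} : Set ℚ).toFinite.infinite_compl).mono fun t ht => ?_)
  have ht' : t ^ 2 ≠ 1 := by simpa using ht
  simp only [Set.mem_ofPred_eq, eval_mul, eval_pow, eval_sub, eval_add, eval_one, eval_X,
    eval_det_one_sub_X_smul, eval_det_one_sub_X_smul_add_X_sq_smul]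
  rw [E.det_one_sub_smul_artinW ρ ht', prod_det_one_add_smul_of_prod_charpoly hchar t]
  ring

/-- three-term determinant formula for the Artin–Ihara `L`-function of
an edge-free quotient, for a degree-`d` representation `ρ` of `G`:
`L(u,ρ,Y/𝕏)⁻¹ = (1-u²)^((b₁(X)-1)d) (1+u)^(l_{ρ,+}) (1-u)^(l_{ρ,-})
  · det(I_{nd} - C_ρA_ρu + (C_ρQ_ρ - I_{nd})u²)`,
where `b₁(X) = m - n + 1` and `l_{ρ,±}` are the numbers of `±1` eigenvalues of the
matrices `ρ(F(l))` over all legs `l` (encoded via the product of their characteristic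
polynomials). Using `L(u,ρ,Y/𝕏)⁻¹ = det(I_{kd} - W_ρ u)` and multiplying both sides
by `(1-u²)^{nd}` to avoid the possibly negative exponent `(b₁-1)d = (m-n)d`. -/
theorem L_three_term (E : EdgeFreeCover) {d : ℕ}
    (ρ : E.G →* Matrix (Fin d) (Fin d) ℚ)
    (a b : ℕ) (hab : a + b = E.legsFinset.card * d)
    (hchar : (∏ h ∈ E.legsFinset, Matrix.charpoly (ρ (E.F h))) =
      (X - 1) ^ a * (X + 1) ^ b) :
    (1 - X ^ 2) ^ (Fintype.card E.X.V * d) *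
      Matrix.det (1 - (X : Polynomial ℚ) • ((E.artinW ρ).map Polynomial.C)) =
    (1 - X ^ 2) ^ (E.numEdgesX * d) * (1 + X) ^ a * (1 - X) ^ b *
      Matrix.det
        (1 - (X : Polynomial ℚ) • ((E.artinC ρ * E.artinA ρ).map Polynomial.C) +
          ((X : Polynomial ℚ) ^ 2) •
            (((E.artinC ρ * E.artinQ d).map Polynomial.C) - 1)) :=
  L_three_term_general E ρ a b hchar
end
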